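/- In a PS4 frame, if there is an R-branch w₁,...,w_{i-1},w_i,w_{i+1},...,w_n (each point R-related to the next), then there is an R-branch w₁,...,w_{i-1},w'_{i+1},...,w'_n such that w_j S w'_j for all j with i+1 ≤ j ≤ n. -/
import Mathlib


inductive Fm where
  | atom : ℕ → Fm
  | neg : Fm → Fm
  | and : Fm → Fm → Fm
  | or : Fm → Fm → Fm
  | box : Fm → Fm
deriving DecidableEq

/-- Branch duplication in a PS4 frame. Given an R-branch
w₁,...,w_{i-1},w_i,w_{i+1},...,wₙ, there is an R-branch
w₁,...,w_{i-1},w'_{i+1},...,w'ₙ with w_j S w'_j for all i+1 ≤ j ≤ n. -/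
theorem ps4_branch_duplication :
    ∀ (W : Type) (R S : W → W → Prop),
      (∀ x, S x x) →
      (∀ x, R x x) →
      (∀ x y z, R x y → R y z → ∃ w, R x w ∧ S z w) →
      (∀ x y z, R x y → S x z → ∃ w, R z w ∧ S y w) →
      (∀ x z w, S x z → R z w → ∃ y, R x y ∧ S y w) →
      ∀ (n i : ℕ) (w : ℕ → W), 2 ≤ i → i ≤ n →
        (∀ j, 1 ≤ j → j + 1 ≤ n → R (w j) (w (j + 1))) →
        ∃ w' : ℕ → W,
          (∀ j, 1 ≤ j → j + 1 ≤ i - 1 → R (w j) (w (j + 1))) ∧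
          (i + 1 ≤ n → R (w (i - 1)) (w' (i + 1))) ∧
          (∀ j, i + 1 ≤ j → j + 1 ≤ n → R (w' j) (w' (j + 1))) ∧
          (∀ j, i + 1 ≤ j → j ≤ n → S (w j) (w' j)) := by
  intro W R S hSrefl hRrefl hPT hForth hBack n i w hi hin hR
  have hfirst : ∀ j, 1 ≤ j → j + 1 ≤ i - 1 → R (w j) (w (j + 1)) := by
    intro j hj hji
    exact hR j hj (le_trans hji (le_trans (Nat.sub_le i 1) hin))
  by_cases h : i + 1 ≤ n
  · -- get the starting point via pseudo-transitivity
    have h1 : R (w (i - 1)) (w i) := by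
      have := hR (i - 1) (by omega) (by omega)
      have heq : i - 1 + 1 = i := by omega
      rwa [heq] at this
    have h2 : R (w i) (w (i + 1)) := hR i (by omega) h
    obtain ⟨v, hv1, hv2⟩ := hPT _ _ _ h1 h2
    have key : ∀ m, i + 1 ≤ m → m ≤ n →
        ∃ f : ℕ → W, R (w (i - 1)) (f (i + 1)) ∧
          (∀ j, i + 1 ≤ j → j + 1 ≤ m → R (f j) (f (j + 1))) ∧
          (∀ j, i + 1 ≤ j → j ≤ m → S (w j) (f j)) := by
      intro m hm
      induction m, hm using Nat.le_induction with
      | base =>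
        intro _
        refine ⟨fun _ => v, hv1, ?_, ?_⟩
        · intro j hj hj1; omega
        · intro j hj hj1
          have : j = i + 1 := by omega
          rw [this]; exact hv2
      | succ m hm ih =>
        intro hmn
        obtain ⟨f, hf1, hf2, hf3⟩ := ih (by omega)
        have hSm : S (w m) (f m) := hf3 m hm le_rfl
        have hRm : R (w m) (w (m + 1)) := hR m (by omega) hmn
        obtain ⟨u, hu1, hu2⟩ := hForth _ _ _ hRm hSm
        refine ⟨fun j => if j = m + 1 then u else f j, ?_, ?_, ?_⟩
        · simp only [show ¬ (i + 1 = m + 1) by omega, if_neg]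
          simpa using hf1
        · intro j hj hj1
          by_cases hcase : j + 1 = m + 1
          · have : j = m := by omega
            subst this
            simp only [hcase, if_pos rfl, if_neg (show ¬ (j = j + 1) by omega)]
            exact hu1
          · simp only [if_neg hcase, if_neg (show ¬ (j = m + 1) by omega)]
            exact hf2 j hj (by omega)
        · intro j hj hj1
          by_cases hcase : j = m + 1
          · subst hcase; simp only [if_pos rfl]; exact hu2
          · simp only [if_neg hcase]; exact hf3 j hj (by omega)
    obtain ⟨f, hf1, hf2, hf3⟩ := key n h le_rfl
    exact ⟨f, hfirst, fun _ => hf1, hf2, hf3⟩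
  · refine ⟨w, hfirst, fun hc => absurd hc h, ?_, ?_⟩
    · intro j hj hj1; omega
    · intro j hj hj1; omega
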